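/- arXiv:1511.03705 — 3 statements merged into one kernel-verified Lean document; each statement's English description precedes it below -/
import Mathlib

section
/- Let c₀ > 0, c₁ > 0, σ > 0 be real constants, and let x, y, z be real numbers with 0 < x < y and 0 ≤ z ≤ c₀. Then the per-relay jamming power constraint z ≤ c₀·(1 − y·(c₁·x + σ²·y)/(y − x))·(1 − x/y) holds if and only if the second-order cone constraint √((2σ·y)² + 4·(1 − z/c₀)/c₁ + ((1 − z/c₀ − c₁·x) − (y + 1/c₁))²) ≤ (1 − z/c₀ − c₁·x) + (y + 1/c₁) holds. -/
/-!
Write `w = z / c₀`, `u = 1 - w - c₁ x` and `v = y + 1 / c₁`. Since `(u + v)² - (u - v)² = 4 u v`,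
the cone constraint says `u + v ≥ 0` and `(2 σ y)² + 4 (1 - w) / c₁ ≤ 4 u v`, and the latter
reduces to `x + σ² y² ≤ u y`. Multiplying the power constraint, which simplifies to
`w ≤ 1 - x / y - c₁ x - σ² y`, by `y > 0` gives the same inequality; it also forces `u > 0`,
so the condition `u + v ≥ 0` comes for free.
-/

theorem Real.sqrt_add_sq_sub_le_add_iff (q u v : ℝ) :
    √(q + (u - v) ^ 2) ≤ u + v ↔ 0 ≤ u + v ∧ q ≤ 4 * u * v := by
  have hsq : (u + v) ^ 2 = 4 * u * v + (u - v) ^ 2 := by ring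
  rw [Real.sqrt_le_iff, hsq, add_le_add_iff_right]

theorem one_sub_mul_div_mul_one_sub_div {x y : ℝ} (c s : ℝ) (hy : y ≠ 0) (hxy : y - x ≠ 0) :
    (1 - y * (c * x + s * y) / (y - x)) * (1 - x / y) = 1 - x / y - c * x - s * y := by
  field_simp
  ring

theorem stmt_3_general (x y z c₀ c₁ σ : ℝ) (hc₀ : 0 < c₀) (hc₁ : 0 < c₁)
    (hx : 0 < x) (hxy : x < y) :
    z ≤ c₀ * ((1 - y * (c₁ * x + σ ^ 2 * y) / (y - x)) * (1 - x / y)) ↔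
      Real.sqrt ((2 * σ * y) ^ 2 + 4 * (1 - z / c₀) / c₁
          + ((1 - z / c₀ - c₁ * x) - (y + 1 / c₁)) ^ 2)
        ≤ (1 - z / c₀ - c₁ * x) + (y + 1 / c₁) := by
  have hy : 0 < y := hx.trans hxy
  rw [one_sub_mul_div_mul_one_sub_div c₁ (σ ^ 2) hy.ne' (sub_ne_zero.2 hxy.ne'),
    ← div_le_iff₀' hc₀, Real.sqrt_add_sq_sub_le_add_iff]
  set w := z / c₀
  set u := 1 - w - c₁ * x
  have hbudget : w ≤ 1 - x / y - c₁ * x - σ ^ 2 * y ↔ 0 ≤ u * y - x - σ ^ 2 * y ^ 2 := by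
    have h : u * y - x - σ ^ 2 * y ^ 2 = y * ((1 - x / y - c₁ * x - σ ^ 2 * y) - w) := by
      field_simp
      ring
    rw [h, mul_nonneg_iff_of_pos_left hy, sub_nonneg]
  have hcone : (2 * σ * y) ^ 2 + 4 * (1 - w) / c₁ ≤ 4 * u * (y + 1 / c₁) ↔
      0 ≤ u * y - x - σ ^ 2 * y ^ 2 := by
    have h : 4 * u * (y + 1 / c₁) - ((2 * σ * y) ^ 2 + 4 * (1 - w) / c₁)
        = 4 * (u * y - x - σ ^ 2 * y ^ 2) := by
      field_simp
      ring
    rw [← sub_nonneg, h]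
    exact mul_nonneg_iff_of_pos_left four_pos
  have hsum : 0 ≤ u * y - x - σ ^ 2 * y ^ 2 → 0 ≤ u + (y + 1 / c₁) := by
    intro h
    have hu : 0 < u := pos_of_mul_pos_left (by nlinarith) hy.le
    positivity
  rw [hbudget, hcone]
  exact ⟨fun h => ⟨hsum h, h⟩, And.right⟩

/-- Per-relay jamming power constraint ↔ second-order cone constraint. -/
theorem stmt_3 (x y z c₀ c₁ σ : ℝ) (hc₀ : 0 < c₀) (hc₁ : 0 < c₁) (hσ : 0 < σ)
    (hx : 0 < x) (hxy : x < y) (hz : 0 ≤ z) (hzc : z ≤ c₀) :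
    z ≤ c₀ * ((1 - y * (c₁ * x + σ ^ 2 * y) / (y - x)) * (1 - x / y)) ↔
      Real.sqrt ((2 * σ * y) ^ 2 + 4 * (1 - z / c₀) / c₁
          + ((1 - z / c₀ - c₁ * x) - (y + 1 / c₁)) ^ 2)
        ≤ (1 - z / c₀ - c₁ * x) + (y + 1 / c₁) :=
  stmt_3_general x y z c₀ c₁ σ hc₀ hc₁ hx hxy
end

section
/- Let N ≥ 1, let M be an N×N Hermitian positive definite complex matrix, let a ∈ ℂ^N, let c > 0 be real, and set Y = M − c·a·aᴴ. If X is an N×N Hermitian positive semidefinite complex matrix with X ≠ 0 and Y·X = 0, then X = c·M⁻¹·a·aᴴ·X and rank(X) = 1. -/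
/-!
Since `M` is invertible, `Y·X = 0` reads `X = c·M⁻¹·(a·aᴴ)·X`, so `X` factors through the
rank-one matrix `a·aᴴ` and has rank at most one; being nonzero, it has rank exactly one.
-/

open scoped ComplexOrder

namespace Matrix

variable {m n K : Type*} [Fintype n]

theorem rank_eq_zero_iff [Field K] {A : Matrix m n K} : A.rank = 0 ↔ A = 0 := by
  classical
  rw [rank, Submodule.finrank_eq_zero, LinearMap.range_eq_bot, ← toLin'_apply',
    LinearEquiv.map_eq_zero_iff]

variable [DecidableEq n] [CommRing K]

theorem eq_nonsing_inv_mul_mul_of_sub_mul_eq_zero {M P : Matrix n n K} {X : Matrix n m K}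
    (hM : IsUnit M.det) (h : (M - P) * X = 0) : X = M⁻¹ * P * X := by
  rw [Matrix.sub_mul, sub_eq_zero] at h
  rw [Matrix.mul_assoc, ← h, nonsing_inv_mul_cancel_left _ _ hM]

theorem rank_le_one_of_sub_vecMulVec_mul_eq_zero [Fintype m] [StrongRankCondition K]
    {M : Matrix n n K} {X : Matrix n m K} {u v : n → K} (hM : IsUnit M.det)
    (h : (M - vecMulVec u v) * X = 0) : X.rank ≤ 1 :=
  calc X.rank = (M⁻¹ * vecMulVec u v * X).rank := by
        rw [← eq_nonsing_inv_mul_mul_of_sub_mul_eq_zero hM h]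
    _ ≤ (M⁻¹ * vecMulVec u v).rank := rank_mul_le_left _ _
    _ ≤ (vecMulVec u v).rank := rank_mul_le_right _ _
    _ ≤ 1 := rank_vecMulVec_le u v

end Matrix

theorem stmt_9_general (N : ℕ) (M : Matrix (Fin N) (Fin N) ℂ)
    (hM : M.PosDef) (a : Fin N → ℂ) (c : ℝ)
    (Y : Matrix (Fin N) (Fin N) ℂ)
    (hY : Y = M - (c : ℂ) • Matrix.vecMulVec a (star a))
    (X : Matrix (Fin N) (Fin N) ℂ) (hX0 : X ≠ 0)
    (hYX : Y * X = 0) :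
    X = (c : ℂ) • (M⁻¹ * Matrix.vecMulVec a (star a) * X) ∧ X.rank = 1 := by
  have hdet : IsUnit M.det := (Matrix.isUnit_iff_isUnit_det M).mp hM.isUnit
  rw [hY, ← Matrix.smul_vecMulVec] at hYX
  refine ⟨?_, le_antisymm (Matrix.rank_le_one_of_sub_vecMulVec_mul_eq_zero hdet hYX) ?_⟩
  · rw [Matrix.smul_vecMulVec] at hYX
    simpa only [Matrix.mul_smul, Matrix.smul_mul] using
      Matrix.eq_nonsing_inv_mul_mul_of_sub_mul_eq_zero hdet hYX
  · exact Nat.one_le_iff_ne_zero.mpr (Matrix.rank_eq_zero_iff.not.mpr hX0)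

/-- Rank-one structure of the optimal semidefinite solution: if
`Y = M − c·a·aᴴ` with `M` Hermitian positive definite and `c > 0`, and `X`
is Hermitian positive semidefinite with `X ≠ 0` and `Y·X = 0`, then
`X = c·M⁻¹·a·aᴴ·X` and `rank X = 1`. -/
theorem stmt_9 (N : ℕ) (hN : 1 ≤ N) (M : Matrix (Fin N) (Fin N) ℂ)
    (hM : M.PosDef) (a : Fin N → ℂ) (c : ℝ) (hc : 0 < c)
    (Y : Matrix (Fin N) (Fin N) ℂ)
    (hY : Y = M - (c : ℂ) • Matrix.vecMulVec a (star a))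
    (X : Matrix (Fin N) (Fin N) ℂ) (hX : X.PosSemidef) (hX0 : X ≠ 0)
    (hYX : Y * X = 0) :
    X = (c : ℂ) • (M⁻¹ * Matrix.vecMulVec a (star a) * X) ∧ X.rank = 1 :=
  stmt_9_general N M hM a c Y hY X hX0 hYX
end

section
/- Let η > 0, γ > 0, σ_c² > 0 and c > 0 be real constants, and define f : (0, 1) → ℝ by f(α) = η·σ_c²/(1 − α) + γ·c/α + γ·σ_c²/(α·(1 − α)). Let α* = 1/(1 + √((η + γ)·σ_c²/(γ·(c + σ_c²)))). Then α* ∈ (0, 1) and f attains its minimum over (0, 1) at α*, i.e., f(α*) ≤ f(α) for all α ∈ (0, 1). -/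
/-!
After the partial-fraction split `1 / (α (1 - α)) = 1 / α + 1 / (1 - α)`, the objective becomes
`A / (1 - α) + B / α` with `A = (η + γ) σ_c²` and `B = γ (c + σ_c²)`. Since `(1 - α) + α = 1`,
Sedrakyan's form of Cauchy–Schwarz bounds it below by `(√A + √B)²`, with equality when
`1 - α` and `α` are proportional to `√A` and `√B`, i.e. at `α = √B / (√A + √B) = α*`.
-/

open Real Set

lemma sq_add_div_add_le_div_add_div {a b x y : ℝ} (hx : 0 < x) (hy : 0 < y) :
    (a + b) ^ 2 / (x + y) ≤ a ^ 2 / x + b ^ 2 / y := by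
  simpa [Fin.sum_univ_two] using
    Finset.sq_sum_div_le_sum_sq_div Finset.univ ![a, b] (g := ![x, y])
      (by simp [Fin.forall_fin_two, hx, hy])

lemma inv_mul_one_sub {α : ℝ} (h₀ : α ≠ 0) (h₁ : α ≠ 1) :
    (α * (1 - α))⁻¹ = α⁻¹ + (1 - α)⁻¹ := by
  have : 1 - α ≠ 0 := sub_ne_zero.2 h₁.symm
  field_simp
  ring

lemma one_div_one_add_sqrt_div {A B : ℝ} (hA : 0 ≤ A) (hB : 0 < B) :
    1 / (1 + √(A / B)) = √B / (√A + √B) := by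
  have : 0 < √B := sqrt_pos.2 hB
  rw [sqrt_div hA]
  field_simp
  ring

lemma div_add_sqrt_mem_Ioo {A B : ℝ} (hA : 0 < A) (hB : 0 < B) :
    √B / (√A + √B) ∈ Ioo 0 1 := by
  have := sqrt_pos.2 hA
  have := sqrt_pos.2 hB
  exact ⟨by positivity, (div_lt_one (by positivity)).2 (by linarith)⟩

lemma isMinOn_div_one_sub_add_div {A B : ℝ} (hA : 0 < A) (hB : 0 < B) :
    IsMinOn (fun α => A / (1 - α) + B / α) (Ioo 0 1) (√B / (√A + √B)) := by
  have hsA := sqrt_pos.2 hA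
  have hsB := sqrt_pos.2 hB
  have hmin : A / (1 - √B / (√A + √B)) + B / (√B / (√A + √B)) = (√A + √B) ^ 2 := by
    have h₁ : 1 - √B / (√A + √B) = √A / (√A + √B) := by field_simp; ring
    rw [h₁, div_div_eq_mul_div, div_div_eq_mul_div, mul_div_right_comm, mul_div_right_comm B, div_sqrt, div_sqrt]
    ring
  intro α hα
  have hle := sq_add_div_add_le_div_add_div (a := √A) (b := √B) (sub_pos.2 hα.2) hα.1
  rw [sub_add_cancel, div_one, sq_sqrt hA.le, sq_sqrt hB.le] at hle
  exact hmin.trans_le hle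

/-- The optimal power-splitting ratio of the distributed DPS algorithm. -/
theorem stmt_14 (η γ σc2 c : ℝ) (hη : 0 < η) (hγ : 0 < γ) (hσ : 0 < σc2)
    (hc : 0 < c) (f : ℝ → ℝ)
    (hf : ∀ α ∈ Set.Ioo (0 : ℝ) 1,
      f α = η * σc2 / (1 - α) + γ * c / α + γ * σc2 / (α * (1 - α)))
    (αstar : ℝ)
    (hαstar : αstar = 1 / (1 + Real.sqrt ((η + γ) * σc2 / (γ * (c + σc2))))) :
    αstar ∈ Set.Ioo (0 : ℝ) 1 ∧ ∀ α ∈ Set.Ioo (0 : ℝ) 1, f αstar ≤ f α := by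
  have hA : 0 < (η + γ) * σc2 := by positivity
  have hB : 0 < γ * (c + σc2) := by positivity
  have hf' : EqOn f (fun α => (η + γ) * σc2 / (1 - α) + γ * (c + σc2) / α) (Ioo 0 1) := by
    intro α hα
    rw [hf α hα, div_eq_mul_inv _ (α * _), inv_mul_one_sub hα.1.ne' hα.2.ne]
    ring
  rw [one_div_one_add_sqrt_div hA.le hB] at hαstar
  subst hαstar
  have hmem := div_add_sqrt_mem_Ioo hA hB
  refine ⟨hmem, fun α hα => ?_⟩
  rw [hf' hmem, hf' hα]
  exact isMinOn_div_one_sub_add_div hA hB hα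
end
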